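/- Let Ā = (A_1,…,A_d) be a d-contraction on a Hilbert space H, M a closed invariant subspace with projection P, and let B̄ and C̄ be the restriction of Ā to M and the compression of Ā to M^⊥, respectively. Then for every p with 1 ≤ p ≤ ∞, the following are equivalent: (i) both defect operators Δ_B̄ and Δ_C̄ belong to 𝓛^p; (ii) Δ_Ā belongs to 𝓛^p and [P, A_k] ∈ 𝓛^{2p} for every k = 1,…,d. -/

import Mathlib

/-!
Write `P` for the projection onto `M` and `D_k = [P, A_k]`; invariance of `M` means
`P A_k P = A_k P`. Conjugating by the inclusions of `M` and `M⊥` turns `Δ_B̄` into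
`P Δ_Ā P + ∑ D_k D_k*` and `Δ_C̄` into `(1 - P) Δ_Ā (1 - P)`. All these summands are positive,
and `𝓛^p` is hereditary (`0 ≤ X ≤ Y ∈ 𝓛^p` gives `X ∈ 𝓛^p`), so (i) says exactly that
`P Δ_Ā P`, `(1 - P) Δ_Ā (1 - P)` and every `D_k D_k*` lie in `𝓛^p`. The pinching inequality
`Δ ≤ 2 (P Δ P + (1 - P) Δ (1 - P))` recovers `Δ_Ā`, and `D ∈ 𝓛^{2p} ↔ D D* ∈ 𝓛^p`.

The Schatten class facts are derived from three estimates on approximation numbers: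
`s_{m+n}(S T) ≤ s_m(S) s_n(T)`, `s_n(T*) = s_n(T)`, and `s_n(S)² ≤ s_n(Y)` whenever `S* S ≤ Y`.
For `p = ∞`, a map `f` with `‖f x‖² ≤ ‖g x‖ ‖x‖` is compact as soon as `g` is.
-/

open scoped ENNReal

noncomputable section

set_option synthInstance.maxHeartbeats 400000
set_option maxHeartbeats 1000000

namespace Arveson

/-- The `n`-th approximation number of a bounded operator between complex normed spaces:
the distance from `T` to the set of operators of rank at most `n`.  For operators between
Hilbert spaces this is precisely the `n`-th singular value of `T`. -/
noncomputable def approxNum {H K : Type*} [NormedAddCommGroup H] [NormedSpace ℂ H]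
    [NormedAddCommGroup K] [NormedSpace ℂ K] (T : H →L[ℂ] K) (n : ℕ) : ℝ :=
  sInf {c : ℝ | ∃ F : H →L[ℂ] K, Module.rank ℂ (LinearMap.range (F : H →ₗ[ℂ] K)) ≤ n ∧ c = ‖T - F‖}

/-- Membership in the Schatten–von Neumann class `𝓛^p`: the singular value sequence
(= the sequence of approximation numbers) is `p`-summable. -/
def MemSchatten {H K : Type*} [NormedAddCommGroup H] [NormedSpace ℂ H]
    [NormedAddCommGroup K] [NormedSpace ℂ K] (p : ℝ) (T : H →L[ℂ] K) : Prop :=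
  Summable fun n => approxNum T n ^ p

/-- Membership in `𝓛^p` for an extended real exponent `p`, where `𝓛^∞` is interpreted as
the class of compact operators. -/
def MemSchattenE {H K : Type*} [NormedAddCommGroup H] [NormedSpace ℂ H]
    [NormedAddCommGroup K] [NormedSpace ℂ K] (p : ℝ≥0∞) (T : H →L[ℂ] K) : Prop :=
  if p = ∞ then IsCompactOperator T else MemSchatten p.toReal T

/-- The orthogonal projection onto a closed subspace `M`, as an operator `H →L[ℂ] H`
(junk value `0` if `M` is not closed). -/
noncomputable def orthProjCLM {H : Type*} [NormedAddCommGroup H] [InnerProductSpace ℂ H]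
    [CompleteSpace H] (M : Submodule ℂ H) : H →L[ℂ] H :=
  open scoped Classical in
  if h : IsClosed (M : Set H) then
    haveI : CompleteSpace M := h.completeSpace_coe
    M.subtypeL.comp (Submodule.orthogonalProjectionOnto M)
  else 0


open scoped InnerProduct ComplexInnerProductSpace

theorem rank_comp_le_of_rank_le {E F G : Type*} [AddCommGroup E] [Module ℂ E] [AddCommGroup F]
    [Module ℂ F] [AddCommGroup G] [Module ℂ G] {g : E →ₗ[ℂ] F} {n : ℕ} (hg : g.rank ≤ n)
    (f : F →ₗ[ℂ] G) : (f ∘ₗ g).rank ≤ n := by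
  have h := (LinearMap.lift_rank_comp_le_right g f).trans (Cardinal.lift_le.mpr hg)
  rwa [Cardinal.lift_natCast, Cardinal.lift_le_nat_iff] at h

section ApproxNum

variable {E F G : Type*} [NormedAddCommGroup E] [NormedSpace ℂ E] [NormedAddCommGroup F]
  [NormedSpace ℂ F] [NormedAddCommGroup G] [NormedSpace ℂ G]

theorem approxNum_le (T : E →L[ℂ] F) {R : E →L[ℂ] F} {n : ℕ} (hR : (R : E →ₗ[ℂ] F).rank ≤ n) :
    approxNum T n ≤ ‖T - R‖ :=
  csInf_le ⟨0, by rintro _ ⟨R, -, rfl⟩; positivity⟩ ⟨R, hR, rfl⟩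

theorem approxNum_le_norm (T : E →L[ℂ] F) (n : ℕ) : approxNum T n ≤ ‖T‖ := by
  simpa using approxNum_le T (R := 0) (by simp)

theorem le_map_approxNum {φ : ℝ → ℝ} (hφ : Monotone φ) (hφc : Continuous φ) {T : E →L[ℂ] F}
    {n : ℕ} {x : ℝ} (h : ∀ R : E →L[ℂ] F, (R : E →ₗ[ℂ] F).rank ≤ n → x ≤ φ ‖T - R‖) :
    x ≤ φ (approxNum T n) := by
  have hne : {c : ℝ | ∃ R : E →L[ℂ] F,
      Module.rank ℂ (LinearMap.range (R : E →ₗ[ℂ] F)) ≤ n ∧ c = ‖T - R‖}.Nonempty :=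
    ⟨_, 0, by simp, rfl⟩
  rw [approxNum, hφ.map_csInf_of_continuousAt hφc.continuousAt hne
    ⟨0, by rintro _ ⟨R, -, rfl⟩; positivity⟩]
  refine le_csInf (hne.image φ) ?_
  rintro _ ⟨_, ⟨R, hR, rfl⟩, rfl⟩
  exact h R hR

theorem le_approxNum {T : E →L[ℂ] F} {n : ℕ} {x : ℝ}
    (h : ∀ R : E →L[ℂ] F, (R : E →ₗ[ℂ] F).rank ≤ n → x ≤ ‖T - R‖) : x ≤ approxNum T n :=
  le_map_approxNum monotone_id continuous_id h

theorem approxNum_nonneg (T : E →L[ℂ] F) (n : ℕ) : 0 ≤ approxNum T n :=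
  le_approxNum fun _ _ => norm_nonneg _

theorem approxNum_antitone (T : E →L[ℂ] F) : Antitone (approxNum T) := fun _ _ hmn =>
  le_approxNum fun _ hR => approxNum_le T (hR.trans (by exact_mod_cast hmn))

theorem approxNum_add_le (S T : E →L[ℂ] F) (m n : ℕ) :
    approxNum (S + T) (m + n) ≤ approxNum S m + approxNum T n := by
  refine le_map_approxNum (φ := (· + approxNum T n)) (fun _ _ h => by simpa using h)
    (by fun_prop) fun R hR => ?_
  refine le_map_approxNum (φ := (‖S - R‖ + ·)) (fun _ _ h => by simpa using h)
    (by fun_prop) fun R' hR' => ?_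
  have hrank : ((R + R' : E →L[ℂ] F) : E →ₗ[ℂ] F).rank ≤ ↑(m + n) := by
    rw [ContinuousLinearMap.toLinearMap_add, Nat.cast_add]
    exact (LinearMap.rank_add_le _ _).trans (add_le_add hR hR')
  calc approxNum (S + T) (m + n) ≤ ‖S + T - (R + R')‖ := approxNum_le _ hrank
    _ ≤ ‖S - R‖ + ‖T - R'‖ := by rw [add_sub_add_comm]; exact norm_add_le _ _

theorem approxNum_comp_add_le (S : F →L[ℂ] G) (T : E →L[ℂ] F) (m n : ℕ) :
    approxNum (S ∘L T) (m + n) ≤ approxNum S m * approxNum T n := by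
  refine le_map_approxNum (φ := (· * approxNum T n))
    (monotone_mul_right_of_nonneg (approxNum_nonneg T n)) (by fun_prop) fun R hR => ?_
  refine le_map_approxNum (φ := (‖S - R‖ * ·)) (monotone_mul_left_of_nonneg (norm_nonneg _))
    (by fun_prop) fun R' hR' => ?_
  have hrank : ((R ∘L T + (S - R) ∘L R' : E →L[ℂ] G) : E →ₗ[ℂ] G).rank ≤ ↑(m + n) := by
    rw [ContinuousLinearMap.toLinearMap_add, ContinuousLinearMap.toLinearMap_comp,
      ContinuousLinearMap.toLinearMap_comp, Nat.cast_add]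
    exact (LinearMap.rank_add_le _ _).trans
      (add_le_add ((LinearMap.rank_comp_le_left _ _).trans hR) (rank_comp_le_of_rank_le hR' _))
  calc approxNum (S ∘L T) (m + n) ≤ ‖S ∘L T - (R ∘L T + (S - R) ∘L R')‖ := approxNum_le _ hrank
    _ = ‖(S - R) ∘L (T - R')‖ := by congr 1; ext; simp; abel
    _ ≤ ‖S - R‖ * ‖T - R'‖ := ContinuousLinearMap.opNorm_comp_le _ _

theorem approxNum_comp_le_left (S : F →L[ℂ] G) (T : E →L[ℂ] F) (n : ℕ) :
    approxNum (S ∘L T) n ≤ ‖S‖ * approxNum T n := by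
  simpa using (approxNum_comp_add_le S T 0 n).trans
    (mul_le_mul_of_nonneg_right (approxNum_le_norm S 0) (approxNum_nonneg T n))

theorem approxNum_comp_le_right (S : F →L[ℂ] G) (T : E →L[ℂ] F) (n : ℕ) :
    approxNum (S ∘L T) n ≤ approxNum S n * ‖T‖ := by
  simpa using (approxNum_comp_add_le S T n 0).trans
    (mul_le_mul_of_nonneg_left (approxNum_le_norm T 0) (approxNum_nonneg S n))

end ApproxNum

section Summability

theorem summable_comp_div_two {f : ℕ → ℝ} (hf : Summable f) : Summable fun n => f (n / 2) :=
  Summable.even_add_odd (by simpa using hf) (by simpa [Nat.mul_add_div] using hf)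

theorem summable_rpow_of_le_mul_div_two {a b : ℕ → ℝ} {q C : ℝ} (hq : 0 ≤ q) (hC : 0 ≤ C)
    (ha : ∀ n, 0 ≤ a n) (hb : ∀ n, 0 ≤ b n) (hab : ∀ n, a n ≤ C * b (n / 2))
    (hsum : Summable fun n => b n ^ q) : Summable fun n => a n ^ q := by
  refine ((summable_comp_div_two hsum).mul_left (C ^ q)).of_nonneg_of_le
    (fun n => Real.rpow_nonneg (ha n) q) fun n => ?_
  rw [← Real.mul_rpow hC (hb _)]
  exact Real.rpow_le_rpow (ha n) (hab n) hq

theorem summable_max_rpow {a b : ℕ → ℝ} {q : ℝ} (ha : ∀ n, 0 ≤ a n)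
    (hb : ∀ n, 0 ≤ b n) (hsa : Summable fun n => a n ^ q) (hsb : Summable fun n => b n ^ q) :
    Summable fun n => max (a n) (b n) ^ q := by
  refine (hsa.add hsb).of_nonneg_of_le
    (fun n => Real.rpow_nonneg ((ha n).trans (le_max_left _ _)) q) fun n => ?_
  have hqa := Real.rpow_nonneg (ha n) q
  have hqb := Real.rpow_nonneg (hb n) q
  rcases max_choice (a n) (b n) with h | h <;> rw [h] <;> linarith

end Summability

section MemSchatten

variable {E F G E' F' : Type*} [NormedAddCommGroup E] [NormedSpace ℂ E] [NormedAddCommGroup F]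
  [NormedSpace ℂ F] [NormedAddCommGroup G] [NormedSpace ℂ G] [NormedAddCommGroup E']
  [NormedSpace ℂ E'] [NormedAddCommGroup F'] [NormedSpace ℂ F'] {q : ℝ}

theorem MemSchatten.of_approxNum_le (hq : 0 ≤ q) {C : ℝ} (hC : 0 ≤ C) {S : E →L[ℂ] F}
    {T : E' →L[ℂ] F'} (h : ∀ n, approxNum S n ≤ C * approxNum T (n / 2))
    (hT : MemSchatten q T) : MemSchatten q S :=
  summable_rpow_of_le_mul_div_two hq hC (approxNum_nonneg S) (approxNum_nonneg T) h hT

theorem memSchatten_zero (hq : 0 < q) : MemSchatten q (0 : E →L[ℂ] F) := by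
  have h n : approxNum (0 : E →L[ℂ] F) n = 0 :=
    le_antisymm (by simpa using approxNum_le_norm (0 : E →L[ℂ] F) n) (approxNum_nonneg _ n)
  simp [MemSchatten, h, Real.zero_rpow hq.ne']

theorem MemSchatten.add (hq : 0 ≤ q) {S T : E →L[ℂ] F} (hS : MemSchatten q S)
    (hT : MemSchatten q T) : MemSchatten q (S + T) := by
  refine summable_rpow_of_le_mul_div_two hq zero_le_two (approxNum_nonneg _)
    (fun n => (approxNum_nonneg S n).trans (le_max_left _ _)) (fun n => ?_)
    (summable_max_rpow (approxNum_nonneg S) (approxNum_nonneg T) hS hT)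
  calc approxNum (S + T) n ≤ approxNum (S + T) (n / 2 + n / 2) := approxNum_antitone _ (by omega)
    _ ≤ approxNum S (n / 2) + approxNum T (n / 2) := approxNum_add_le S T _ _
    _ ≤ 2 * max (approxNum S (n / 2)) (approxNum T (n / 2)) := by
      linarith [le_max_left (approxNum S (n / 2)) (approxNum T (n / 2)),
        le_max_right (approxNum S (n / 2)) (approxNum T (n / 2))]

theorem MemSchatten.comp_left (hq : 0 ≤ q) {T : E →L[ℂ] F} (hT : MemSchatten q T)
    (S : F →L[ℂ] G) : MemSchatten q (S ∘L T) :=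
  hT.of_approxNum_le hq (norm_nonneg S) fun n => (approxNum_comp_le_left S T n).trans
    (mul_le_mul_of_nonneg_left (approxNum_antitone T (Nat.div_le_self n 2)) (norm_nonneg S))

theorem MemSchatten.comp_right (hq : 0 ≤ q) {T : F →L[ℂ] G} (hT : MemSchatten q T)
    (S : E →L[ℂ] F) : MemSchatten q (T ∘L S) :=
  hT.of_approxNum_le hq (norm_nonneg S) fun n => (approxNum_comp_le_right T S n).trans <| by
    rw [mul_comm]
    exact mul_le_mul_of_nonneg_left (approxNum_antitone T (Nat.div_le_self n 2)) (norm_nonneg S)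

end MemSchatten

section Hilbert

variable {E H K : Type*} [NormedAddCommGroup E] [NormedSpace ℂ E]
  [NormedAddCommGroup H] [InnerProductSpace ℂ H] [CompleteSpace H]
  [NormedAddCommGroup K] [InnerProductSpace ℂ K] [CompleteSpace K] {q : ℝ}

open ContinuousLinearMap

theorem exists_isStarProjection_comp_eq_self {R : E →L[ℂ] K} {n : ℕ}
    (hR : (R : E →ₗ[ℂ] K).rank ≤ n) :
    ∃ P : K →L[ℂ] K, IsStarProjection P ∧ (P : K →ₗ[ℂ] K).rank ≤ n ∧ P ∘L R = R := by
  set V := LinearMap.range (R : E →ₗ[ℂ] K)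
  have : FiniteDimensional ℂ V :=
    Module.rank_lt_aleph0_iff.mp (hR.trans_lt (Cardinal.natCast_lt_aleph0))
  refine ⟨V.starProjection, isStarProjection_starProjection, ?_, ?_⟩
  · rwa [LinearMap.rank, Submodule.range_starProjection V]
  · ext x
    exact Submodule.starProjection_eq_self_iff.mpr ⟨x, rfl⟩

theorem rank_adjoint_le {R : H →L[ℂ] K} {n : ℕ} (hR : (R : H →ₗ[ℂ] K).rank ≤ n) :
    ((R† : K →L[ℂ] H) : K →ₗ[ℂ] H).rank ≤ n := by
  obtain ⟨P, hP, hPn, hPR⟩ := exists_isStarProjection_comp_eq_self hR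
  have h : R† = R† ∘L P := by
    conv_lhs => rw [← hPR]
    rw [adjoint_comp, ← star_eq_adjoint P, hP.isSelfAdjoint.star_eq]
  rw [h, toLinearMap_comp]
  exact rank_comp_le_of_rank_le hPn _

theorem approxNum_adjoint_le (T : H →L[ℂ] K) (n : ℕ) : approxNum (T†) n ≤ approxNum T n :=
  le_approxNum fun R hR => by
    simpa only [← map_sub, LinearIsometryEquiv.norm_map] using
      approxNum_le (T†) (rank_adjoint_le hR)

theorem approxNum_adjoint (T : H →L[ℂ] K) (n : ℕ) : approxNum (T†) n = approxNum T n :=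
  le_antisymm (approxNum_adjoint_le T n) (by simpa using approxNum_adjoint_le (T†) n)

/-- Cut `S` down by the star projection `1 - P` that kills a rank-`n` approximant `R` of `Y`;
then `‖S (1 - P)‖² = ‖(1 - P) S† S (1 - P)‖ ≤ ‖(1 - P) (Y - R) (1 - P)‖`. -/
theorem approxNum_sq_le_of_adjoint_comp_le {S : H →L[ℂ] K} {Y : H →L[ℂ] H}
    (hY : S† ∘L S ≤ Y) (n : ℕ) : approxNum S n ^ 2 ≤ approxNum Y n := by
  refine le_approxNum fun R hR => ?_
  obtain ⟨P, hP, hPn, hPR⟩ := exists_isStarProjection_comp_eq_self hR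
  have hQ : IsStarProjection (1 - P) := hP.one_sub
  have hQR : (1 - P) * R = 0 := by rw [sub_mul, one_mul, mul_def, hPR, sub_self]
  have hS : approxNum S n ≤ ‖S ∘L (1 - P)‖ := by
    have h := approxNum_le S (R := S ∘L P) (by
      rw [toLinearMap_comp]; exact rank_comp_le_of_rank_le hPn _)
    exact h.trans_eq (by congr 1; ext; simp)
  have hSS : (0 : H →L[ℂ] H) ≤ S† ∘L S :=
    (nonneg_iff_isPositive _).mpr (isPositive_adjoint_comp_self S)
  calc approxNum S n ^ 2 ≤ ‖S ∘L (1 - P)‖ ^ 2 := pow_le_pow_left₀ (approxNum_nonneg S n) hS 2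
    _ = ‖star (1 - P) * (S† ∘L S) * (1 - P)‖ := by
      rw [sq, ← norm_adjoint_comp_self, adjoint_comp, ← star_eq_adjoint]; rfl
    _ ≤ ‖star (1 - P) * Y * (1 - P)‖ := CStarAlgebra.norm_le_norm_of_nonneg_of_le
      (star_left_conjugate_nonneg hSS _) (star_left_conjugate_le_conjugate hY _)
    _ = ‖(1 - P) * (Y - R) * (1 - P)‖ := by
      rw [hQ.isSelfAdjoint.star_eq, mul_sub (1 - P) Y R, hQR, sub_zero]
    _ ≤ ‖1 - P‖ * ‖Y - R‖ * ‖1 - P‖ := norm_mul₃_le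
    _ ≤ 1 * ‖Y - R‖ * 1 := by gcongr <;> exact hQ.norm_le
    _ = ‖Y - R‖ := by ring

theorem approxNum_two_mul_le_of_nonneg_of_le {X Y : H →L[ℂ] H} (hX : 0 ≤ X) (hXY : X ≤ Y)
    (n : ℕ) : approxNum X (2 * n) ≤ approxNum Y n := by
  obtain ⟨S, rfl⟩ := CStarAlgebra.nonneg_iff_eq_star_mul_self.mp hX
  rw [star_eq_adjoint] at hXY ⊢
  calc approxNum (S† * S) (2 * n) ≤ approxNum (S†) n * approxNum S n := by
        rw [two_mul]; exact approxNum_comp_add_le _ _ n n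
    _ = approxNum S n ^ 2 := by rw [approxNum_adjoint, sq]
    _ ≤ approxNum Y n := approxNum_sq_le_of_adjoint_comp_le hXY n

theorem approxNum_comp_adjoint_two_mul_le (T : H →L[ℂ] K) (n : ℕ) :
    approxNum (T ∘L T†) (2 * n) ≤ approxNum T n ^ 2 := by
  calc approxNum (T ∘L T†) (2 * n) ≤ approxNum T n * approxNum (T†) n := by
        rw [two_mul]; exact approxNum_comp_add_le _ _ n n
    _ = approxNum T n ^ 2 := by rw [approxNum_adjoint, sq]

theorem approxNum_sq_le_comp_adjoint (T : H →L[ℂ] K) (n : ℕ) :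
    approxNum T n ^ 2 ≤ approxNum (T ∘L T†) n := by
  simpa [approxNum_adjoint] using approxNum_sq_le_of_adjoint_comp_le (S := T†) le_rfl n

theorem MemSchatten.of_nonneg_of_le (hq : 0 ≤ q) {X Y : H →L[ℂ] H} (hX : 0 ≤ X) (hXY : X ≤ Y)
    (hY : MemSchatten q Y) : MemSchatten q X :=
  hY.of_approxNum_le hq zero_le_one fun n => by
    rw [one_mul]
    exact (approxNum_antitone X (by omega)).trans (approxNum_two_mul_le_of_nonneg_of_le hX hXY _)

theorem memSchatten_two_mul_iff (hq : 0 ≤ q) (T : H →L[ℂ] K) :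
    MemSchatten (2 * q) T ↔ MemSchatten q (T ∘L T†) := by
  have hsq : MemSchatten (2 * q) T ↔ Summable fun n => (approxNum T n ^ 2) ^ q := by
    simp_rw [MemSchatten, ← Real.rpow_natCast, ← Real.rpow_mul (approxNum_nonneg T _)]
    norm_num
  rw [hsq]
  constructor
  · refine summable_rpow_of_le_mul_div_two hq zero_le_one (approxNum_nonneg _)
      (fun _ => sq_nonneg _) fun n => ?_
    rw [one_mul]
    exact (approxNum_antitone _ (by omega)).trans (approxNum_comp_adjoint_two_mul_le T _)
  · refine summable_rpow_of_le_mul_div_two hq zero_le_one (fun _ => sq_nonneg _)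
      (approxNum_nonneg _) fun n => ?_
    rw [one_mul]
    exact (approxNum_sq_le_comp_adjoint T n).trans (approxNum_antitone _ (Nat.div_le_self n 2))

end Hilbert

section Compact

open ContinuousLinearMap Metric

theorem isCompactOperator_of_norm_sq_le {E F G : Type*} [NormedAddCommGroup E]
    [NormedSpace ℂ E] [NormedAddCommGroup F] [NormedSpace ℂ F] [CompleteSpace F]
    [NormedAddCommGroup G] [NormedSpace ℂ G] {f : E →L[ℂ] F} {g : E →L[ℂ] G}
    (h : ∀ x, ‖f x‖ ^ 2 ≤ ‖g x‖ * ‖x‖) (hg : IsCompactOperator g) : IsCompactOperator f := by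
  refine (isCompactOperator_iff_isCompact_closure_image_ball (f : E →ₗ[ℂ] F) one_pos).mpr
    ((totallyBounded_closure.mpr ?_).isCompact_of_isClosed isClosed_closure)
  have hg' : TotallyBounded (g '' ball 0 1) :=
    (hg.isCompact_closure_image_ball (f := (g : E →ₗ[ℂ] G)) 1).totallyBounded.subset
      subset_closure
  refine totallyBounded_iff.mpr fun ε hε => ?_
  obtain ⟨u, hu, hufin, hcover⟩ := Set.exists_subset_image_finite_and.mp
    (finite_approx_of_totallyBounded hg' (ε ^ 2 / 4) (by positivity))
  refine ⟨f '' u, hufin.image f, ?_⟩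
  rintro _ ⟨x, hx, rfl⟩
  obtain ⟨_, ⟨z, hz, rfl⟩, hxz⟩ := Set.mem_iUnion₂.mp (hcover ⟨x, hx, rfl⟩)
  refine Set.mem_iUnion₂.mpr ⟨f z, ⟨z, hz, rfl⟩, ?_⟩
  rw [ContinuousLinearMap.coe_coe, mem_ball, dist_eq_norm, ← map_sub]
  rw [mem_ball, dist_eq_norm, ← map_sub] at hxz
  have hx1 : ‖x‖ < 1 := mem_ball_zero_iff.mp hx
  have hz1 : ‖z‖ < 1 := mem_ball_zero_iff.mp (hu hz)
  have hxz2 : ‖x - z‖ < 2 := (norm_sub_le x z).trans_lt (by linarith)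
  have hsq : ‖f (x - z)‖ ^ 2 < ε ^ 2 := by
    nlinarith [h (x - z), norm_nonneg (g (x - z)), norm_nonneg (x - z)]
  exact (pow_lt_pow_iff_left₀ (norm_nonneg _) hε.le two_ne_zero).mp hsq

variable {H K : Type*} [NormedAddCommGroup H] [InnerProductSpace ℂ H] [CompleteSpace H]
  [NormedAddCommGroup K] [InnerProductSpace ℂ K] [CompleteSpace K]

theorem norm_apply_sq_le (A : H →L[ℂ] K) (x : H) : ‖A x‖ ^ 2 ≤ ‖(A† ∘L A) x‖ * ‖x‖ := by
  rw [apply_norm_sq_eq_inner_adjoint_left]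
  exact re_inner_le_norm _ _

theorem IsCompactOperator.of_nonneg_of_le {X Y : H →L[ℂ] H} (hX : 0 ≤ X) (hXY : X ≤ Y)
    (hY : IsCompactOperator Y) : IsCompactOperator X := by
  obtain ⟨S, rfl⟩ := CStarAlgebra.nonneg_iff_eq_star_mul_self.mp hX
  rw [star_eq_adjoint] at hXY ⊢
  have hform (x : H) : RCLike.re ⟪(S† ∘L S) x, x⟫ ≤ RCLike.re ⟪Y x, x⟫ := by
    have := ((le_def _ _).mp hXY).re_inner_nonneg_left x
    rwa [sub_apply, inner_sub_left, map_sub, sub_nonneg] at this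
  have hS : IsCompactOperator S := isCompactOperator_of_norm_sq_le (g := Y) (fun x => by
    rw [apply_norm_sq_eq_inner_adjoint_left]
    exact (hform x).trans (re_inner_le_norm _ _)) hY
  exact hS.clm_comp (S†)

theorem isCompactOperator_iff_comp_adjoint (T : H →L[ℂ] K) :
    IsCompactOperator T ↔ IsCompactOperator (T ∘L T†) := by
  refine ⟨fun hT => hT.comp_clm (T†), fun h => ?_⟩
  have hT' : IsCompactOperator (T†) :=
    isCompactOperator_of_norm_sq_le (fun x => by simpa using norm_apply_sq_le (T†) x) h
  exact isCompactOperator_of_norm_sq_le (norm_apply_sq_le T) (hT'.comp_clm T)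

end Compact

section MemSchattenE

variable {E F G H K : Type*} [NormedAddCommGroup E] [NormedSpace ℂ E] [NormedAddCommGroup F]
  [NormedSpace ℂ F] [NormedAddCommGroup G] [NormedSpace ℂ G]
  [NormedAddCommGroup H] [InnerProductSpace ℂ H] [CompleteSpace H]
  [NormedAddCommGroup K] [InnerProductSpace ℂ K] [CompleteSpace K] {p : ℝ≥0∞}

theorem MemSchattenE.comp_left {T : E →L[ℂ] F} (hT : MemSchattenE p T) (S : F →L[ℂ] G) :
    MemSchattenE p (S ∘L T) := by
  unfold MemSchattenE at *
  split_ifs at hT ⊢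
  · exact hT.clm_comp S
  · exact hT.comp_left ENNReal.toReal_nonneg S

theorem MemSchattenE.comp_right {T : F →L[ℂ] G} (hT : MemSchattenE p T) (S : E →L[ℂ] F) :
    MemSchattenE p (T ∘L S) := by
  unfold MemSchattenE at *
  split_ifs at hT ⊢
  · exact hT.comp_clm S
  · exact hT.comp_right ENNReal.toReal_nonneg S

theorem MemSchattenE.add {S T : E →L[ℂ] F} (hS : MemSchattenE p S) (hT : MemSchattenE p T) :
    MemSchattenE p (S + T) := by
  unfold MemSchattenE at *
  split_ifs at hS hT ⊢
  · exact hS.add hT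
  · exact hS.add ENNReal.toReal_nonneg hT

theorem MemSchattenE.zero (hp : p ≠ 0) : MemSchattenE p (0 : E →L[ℂ] F) := by
  unfold MemSchattenE
  split_ifs with htop
  · exact isCompactOperator_zero
  · exact memSchatten_zero (ENNReal.toReal_pos hp htop)

theorem MemSchattenE.sum (hp : p ≠ 0) {ι : Type*} {s : Finset ι} {T : ι → E →L[ℂ] F}
    (hT : ∀ i ∈ s, MemSchattenE p (T i)) : MemSchattenE p (∑ i ∈ s, T i) := by
  classical
  induction s using Finset.induction_on with
  | empty => simpa using MemSchattenE.zero hp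
  | insert i s hi ih =>
    rw [Finset.sum_insert hi]
    exact (hT i (s.mem_insert_self i)).add (ih fun j hj => hT j (Finset.mem_insert_of_mem hj))

theorem MemSchattenE.of_nonneg_of_le {X Y : H →L[ℂ] H} (hX : 0 ≤ X) (hXY : X ≤ Y)
    (hY : MemSchattenE p Y) : MemSchattenE p X := by
  unfold MemSchattenE at *
  split_ifs at hY ⊢
  · exact IsCompactOperator.of_nonneg_of_le hX hXY hY
  · exact hY.of_nonneg_of_le ENNReal.toReal_nonneg hX hXY

theorem memSchattenE_two_mul_iff (T : H →L[ℂ] K) :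
    MemSchattenE (2 * p) T ↔ MemSchattenE p (T ∘L T†) := by
  unfold MemSchattenE
  by_cases htop : p = ∞
  · simp only [htop, ENNReal.mul_top two_ne_zero, if_true]
    exact isCompactOperator_iff_comp_adjoint T
  · rw [if_neg (ENNReal.mul_ne_top ENNReal.ofNat_ne_top htop), if_neg htop, ENNReal.toReal_mul]
    exact memSchatten_two_mul_iff ENNReal.toReal_nonneg T

theorem memSchattenE_add_iff_of_nonneg {X Y : H →L[ℂ] H} (hX : 0 ≤ X) (hY : 0 ≤ Y) :
    MemSchattenE p (X + Y) ↔ MemSchattenE p X ∧ MemSchattenE p Y :=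
  ⟨fun h => ⟨h.of_nonneg_of_le hX (le_add_of_nonneg_right hY),
    h.of_nonneg_of_le hY (le_add_of_nonneg_left hX)⟩, fun h => h.1.add h.2⟩

theorem memSchattenE_sum_iff_of_nonneg (hp : p ≠ 0) {ι : Type*} {s : Finset ι}
    {X : ι → H →L[ℂ] H} (hX : ∀ i ∈ s, 0 ≤ X i) :
    MemSchattenE p (∑ i ∈ s, X i) ↔ ∀ i ∈ s, MemSchattenE p (X i) :=
  ⟨fun h i hi => h.of_nonneg_of_le (hX i hi) (Finset.single_le_sum hX hi), MemSchattenE.sum hp⟩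

theorem pinching_add_pinching_sub {R : Type*} [Ring R] (P X : R) :
    (P * X * P + (1 - P) * X * (1 - P)) + (P * X * P + (1 - P) * X * (1 - P)) - X
      = (P - (1 - P)) * X * (P - (1 - P)) := by
  noncomm_ring

theorem memSchattenE_iff_of_isStarProjection {X P : H →L[ℂ] H} (hX : 0 ≤ X)
    (hP : IsStarProjection P) :
    MemSchattenE p X ↔ MemSchattenE p (P * X * P) ∧ MemSchattenE p ((1 - P) * X * (1 - P)) := by
  refine ⟨fun h => ⟨(h.comp_left P).comp_right P, (h.comp_left _).comp_right _⟩,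
    fun ⟨h₁, h₂⟩ => ?_⟩
  have hle : X ≤ (P * X * P + (1 - P) * X * (1 - P)) + (P * X * P + (1 - P) * X * (1 - P)) := by
    rw [← sub_nonneg, pinching_add_pinching_sub]
    have h := star_left_conjugate_nonneg hX (P - (1 - P))
    rwa [(hP.isSelfAdjoint.sub hP.one_sub.isSelfAdjoint).star_eq] at h
  exact ((h₁.add h₂).add (h₁.add h₂)).of_nonneg_of_le hX hle

end MemSchattenE

section CompressionIdentities

variable {R ι : Type*} [Ring R] [StarRing R] [Fintype ι] {P : R}

theorem compress_mul_star_compress (hP : IsStarProjection P) {a : R} (hPa : P * a * P = a * P) :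
    P * a * P * star (P * a * P)
      = P * (a * star a) * P - (P * a - a * P) * star (P * a - a * P) := by
  have hP₂ := hP.isIdempotentElem.eq
  have hPs := hP.isSelfAdjoint.star_eq
  have hsa : P * star a * P = P * star a := by
    simpa [star_mul, hPs, mul_assoc] using congrArg star hPa
  have hstar : star (P * a * P) = P * star a * P := by simp [star_mul, hPs, mul_assoc]
  have hstarD : star (P * a - a * P) = star a * P - P * star a := by simp [star_mul, hPs]
  rw [hstar, hstarD]
  calc P * a * P * (P * star a * P) = a * (P * P) * star a := by rw [hPa, hsa]; noncomm_ring
    _ = P * a * P * star a + a * (P * star a * P) - a * (P * P) * star a := by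
      rw [hPa, hsa, hP₂]; noncomm_ring
    _ = _ := by noncomm_ring

theorem one_sub_compress_mul_star_compress (hP : IsStarProjection P) {a : R}
    (hPa : P * a * P = a * P) :
    (1 - P) * a * (1 - P) * star ((1 - P) * a * (1 - P)) = (1 - P) * (a * star a) * (1 - P) := by
  have hQa : (1 - P) * a * (1 - P) = (1 - P) * a := by
    rw [← sub_eq_zero, show (1 - P) * a * (1 - P) - (1 - P) * a = P * a * P - a * P by
      noncomm_ring, hPa, sub_self]
  rw [hQa, star_mul, hP.one_sub.isSelfAdjoint.star_eq]
  simp only [mul_assoc]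

theorem compress_defect (hP : IsStarProjection P) {a : ι → R}
    (hPa : ∀ k, P * a k * P = a k * P) :
    P - ∑ k, P * a k * P * star (P * a k * P) = P * (1 - ∑ k, a k * star (a k)) * P
      + ∑ k, (P * a k - a k * P) * star (P * a k - a k * P) := by
  simp_rw [compress_mul_star_compress hP (hPa _), Finset.sum_sub_distrib, mul_sub, sub_mul,
    Finset.mul_sum, Finset.sum_mul, mul_one, hP.isIdempotentElem.eq]
  abel

theorem one_sub_compress_defect (hP : IsStarProjection P) {a : ι → R}
    (hPa : ∀ k, P * a k * P = a k * P) :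
    (1 - P) - ∑ k, (1 - P) * a k * (1 - P) * star ((1 - P) * a k * (1 - P))
      = (1 - P) * (1 - ∑ k, a k * star (a k)) * (1 - P) := by
  rw [Finset.sum_congr rfl fun k _ => one_sub_compress_mul_star_compress hP (hPa k),
    ← Finset.sum_mul, ← Finset.mul_sum, mul_sub (1 - P) 1, mul_one, sub_mul (1 - P) _ (1 - P),
    hP.one_sub.isIdempotentElem.eq]

end CompressionIdentities

section Isometry

open ContinuousLinearMap

variable {H K ι : Type*} [NormedAddCommGroup H] [InnerProductSpace ℂ H] [CompleteSpace H]
  [NormedAddCommGroup K] [InnerProductSpace ℂ K] [CompleteSpace K] [Fintype ι]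
  {V : K →L[ℂ] H} {p : ℝ≥0∞}

theorem memSchattenE_conj_iff (hV : V† ∘L V = 1) {X : K →L[ℂ] K} :
    MemSchattenE p (V ∘L X ∘L V†) ↔ MemSchattenE p X := by
  refine ⟨fun h => ?_, fun h => (h.comp_right _).comp_left _⟩
  have hV' (y : K) : (V†) (V y) = y := by rw [← comp_apply, hV, one_apply_eq_self]
  have hX : V† ∘L (V ∘L X ∘L V†) ∘L V = X := by ext; simp [hV']
  simpa only [hX] using (h.comp_right V).comp_left (V†)

theorem conj_defect (hV : V† ∘L V = 1) (X : ι → K →L[ℂ] K) :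
    V ∘L (1 - ∑ k, X k * star (X k)) ∘L V†
      = V ∘L V† - ∑ k, (V ∘L X k ∘L V†) * star (V ∘L X k ∘L V†) := by
  have hV' (y : K) : (V†) (V y) = y := by rw [← comp_apply, hV, one_apply_eq_self]
  ext x
  simp [star_eq_adjoint, adjoint_comp, hV', sum_apply]

theorem adjoint_subtypeL_comp_subtypeL (U : Submodule ℂ H) [CompleteSpace U] :
    U.subtypeL† ∘L U.subtypeL = 1 := by
  rw [Submodule.adjoint_subtypeL]; ext; simp

theorem subtypeL_comp_adjoint_subtypeL (U : Submodule ℂ H) [CompleteSpace U] :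
    U.subtypeL ∘L U.subtypeL† = U.starProjection := by
  rw [Submodule.adjoint_subtypeL]; rfl

end Isometry

theorem memSchattenE_compress_defect_iff {H ι : Type*} [NormedAddCommGroup H]
    [InnerProductSpace ℂ H] [CompleteSpace H] [Fintype ι] {p : ℝ≥0∞} (hp : p ≠ 0)
    {X P : H →L[ℂ] H} (D : ι → H →L[ℂ] H) (hX : 0 ≤ X) (hP : IsStarProjection P) :
    (MemSchattenE p (P * X * P + ∑ k, D k * star (D k)) ∧
        MemSchattenE p ((1 - P) * X * (1 - P))) ↔
      (MemSchattenE p X ∧ ∀ k, MemSchattenE (2 * p) (D k)) := by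
  have hDD (k : ι) : 0 ≤ D k * star (D k) := mul_star_self_nonneg _
  have hPXP : 0 ≤ P * X * P := by
    simpa [hP.isSelfAdjoint.star_eq] using star_left_conjugate_nonneg hX P
  rw [memSchattenE_add_iff_of_nonneg hPXP (Finset.sum_nonneg fun k _ => hDD k),
    memSchattenE_sum_iff_of_nonneg hp fun k _ => hDD k, memSchattenE_iff_of_isStarProjection hX hP]
  simp only [Finset.mem_univ, true_implies, memSchattenE_two_mul_iff,
    ← ContinuousLinearMap.star_eq_adjoint]
  tauto

theorem statement15_general {H : Type*} [NormedAddCommGroup H] [InnerProductSpace ℂ H]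
    [CompleteSpace H] (d : ℕ) (A : Fin d → (H →L[ℂ] H))
    (hcontr : ((1 : H →L[ℂ] H) - ∑ k, A k * star (A k)).IsPositive)
    (M : Submodule ℂ H) [CompleteSpace M] (hMcl : IsClosed (M : Set H))
    (hInv : ∀ k, ∀ x ∈ M, A k x ∈ M)
    (B : Fin d → (↥M →L[ℂ] ↥M))
    (hB : B = fun k => ((A k) ∘L M.subtypeL).codRestrict M (fun x => hInv k x x.2))
    (C : Fin d → (↥Mᗮ →L[ℂ] ↥Mᗮ))
    (hC : C = fun k => Submodule.orthogonalProjectionOnto Mᗮ ∘L ((A k) ∘L (Mᗮ).subtypeL))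
    (p : ℝ≥0∞) (hp : 1 ≤ p) :
    (MemSchattenE p ((1 : ↥M →L[ℂ] ↥M) - ∑ k, B k * star (B k)) ∧
        MemSchattenE p ((1 : ↥Mᗮ →L[ℂ] ↥Mᗮ) - ∑ k, C k * star (C k))) ↔
      (MemSchattenE p ((1 : H →L[ℂ] H) - ∑ k, A k * star (A k)) ∧
        ∀ k, MemSchattenE (2 * p) (orthProjCLM M * A k - A k * orthProjCLM M)) := by
  set P := M.starProjection
  have hP : IsStarProjection P := isStarProjection_starProjection
  have hMP : orthProjCLM M = P := dif_pos hMcl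
  have hPA (k : Fin d) : P * A k * P = A k * P := by
    ext x
    exact Submodule.starProjection_eq_self_iff.mpr (hInv k _ (M.starProjection_apply_mem x))
  have hB' (k : Fin d) : M.subtypeL ∘L B k ∘L M.subtypeL† = P * A k * P := by
    rw [Submodule.adjoint_subtypeL, hPA k, hB]
    rfl
  have hC' (k : Fin d) : (Mᗮ).subtypeL ∘L C k ∘L (Mᗮ).subtypeL† = (1 - P) * A k * (1 - P) := by
    rw [Submodule.adjoint_subtypeL, hC, ← Submodule.starProjection_orthogonal']
    rfl
  have hV := adjoint_subtypeL_comp_subtypeL M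
  have hW := adjoint_subtypeL_comp_subtypeL Mᗮ
  rw [← memSchattenE_conj_iff hV, ← memSchattenE_conj_iff hW, conj_defect hV, conj_defect hW,
    subtypeL_comp_adjoint_subtypeL M, subtypeL_comp_adjoint_subtypeL Mᗮ,
    Submodule.starProjection_orthogonal']
  simp only [hB', hC']
  rw [compress_defect hP hPA, one_sub_compress_defect hP hPA, hMP]
  exact memSchattenE_compress_defect_iff (zero_lt_one.trans_le hp).ne' _
    ((ContinuousLinearMap.nonneg_iff_isPositive _).mpr hcontr) hP

/-- Let `Ā` be a `d`-contraction, `M` a closed invariant subspace,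
`B̄` the restriction of `Ā` to `M` and `C̄` the compression of `Ā` to `M⊥`.  Then for
every `1 ≤ p ≤ ∞` the following are equivalent: (i) both defect operators `Δ_B̄` and
`Δ_C̄` belong to `𝓛^p`; (ii) `Δ_Ā ∈ 𝓛^p` and `[P_M, A_k] ∈ 𝓛^{2p}` for all `k`. -/
theorem statement15 {H : Type*} [NormedAddCommGroup H] [InnerProductSpace ℂ H]
    [CompleteSpace H] (d : ℕ) (A : Fin d → (H →L[ℂ] H))
    (hcomm : ∀ i j, A i * A j = A j * A i)
    (hcontr : ((1 : H →L[ℂ] H) - ∑ k, A k * star (A k)).IsPositive)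
    (M : Submodule ℂ H) [CompleteSpace M] (hMcl : IsClosed (M : Set H))
    (hInv : ∀ k, ∀ x ∈ M, A k x ∈ M)
    (B : Fin d → (↥M →L[ℂ] ↥M))
    (hB : B = fun k => ((A k) ∘L M.subtypeL).codRestrict M (fun x => hInv k x x.2))
    (C : Fin d → (↥Mᗮ →L[ℂ] ↥Mᗮ))
    (hC : C = fun k => Submodule.orthogonalProjectionOnto Mᗮ ∘L ((A k) ∘L (Mᗮ).subtypeL))
    (p : ℝ≥0∞) (hp : 1 ≤ p) :
    (MemSchattenE p ((1 : ↥M →L[ℂ] ↥M) - ∑ k, B k * star (B k)) ∧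
        MemSchattenE p ((1 : ↥Mᗮ →L[ℂ] ↥Mᗮ) - ∑ k, C k * star (C k))) ↔
      (MemSchattenE p ((1 : H →L[ℂ] H) - ∑ k, A k * star (A k)) ∧
        ∀ k, MemSchattenE (2 * p) (orthProjCLM M * A k - A k * orthProjCLM M)) :=
  statement15_general d A hcontr M hMcl hInv B hB C hC p hp

end Arveson
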